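/- arXiv:1409.2190 — 5 statements merged into one kernel-verified Lean document; each statement's English description precedes it below -/
import Mathlib

section
/- Let n ≥ 2, let χ and χ̄ be real symmetric (n−1)×(n−1) matrices, and let r ≥ 1, s ≥ 0 be integers with r+s ≤ n−1. Then the directional derivative at t = 0 of t ↦ P_{r,s}(χ + t·I, χ̄) equals (r·(n−(r+s))/(r+s))·P_{r−1,s}(χ,χ̄). -/
/-!
Substituting `ȳ ↦ y ȳ` turns `det (I + y χ + ȳ χ̄)` into `det (I + y W)` with `W = χ + ȳ χ̄`,
and moves the coefficient of `y^r ȳ^s` to that of `y^(r+s) ȳ^s`. For an `m × m` matrix `W`,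
`det (u I + v W)` is the degree `m` homogenization of `det (I + v W)`, so replacing `χ` by
`χ + t I` gives `det (I + y (W + t I)) = ∑_{j+k=m} e_j(W) y^j (1 + t y)^k`, where the `e_j(W)`
are the coefficients of `det (I + y W)`. Differentiating at `t = 0`, only the term `j = r+s-1`
contributes to the coefficient of `y^(r+s)`, with factor `k = (n - 1) - (r+s-1) = n - (r+s)`; the
factorial normalisations of `P_{r,s}` and `P_{r-1,s}` differ by the factor `r / (r+s)`.
-/

open Matrix

/-- `sigmaM k W` is the `k`-th elementary symmetric function of (the eigenvalues of) `W`,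
defined as the coefficient of `x^k` in `det (I + x • W)`. -/
noncomputable def sigmaM {m : ℕ} {R : Type*} [CommRing R] (k : ℕ)
    (W : Matrix (Fin m) (Fin m) R) : R :=
  ((1 + (Polynomial.X : Polynomial R) • W.map Polynomial.C).det).coeff k

/-- The mixed higher order mean curvature `P_{r,s}(χ, χ̄)`, defined as
`(r! s! / (r+s)!)` times the coefficient of `y^r ȳ^s` in `det (I + y • χ + ȳ • χ̄)`. -/
noncomputable def mixedP {m : ℕ} (r s : ℕ) (χ χb : Matrix (Fin m) (Fin m) ℝ) : ℝ :=
  ((Nat.factorial r * Nat.factorial s : ℝ) / (Nat.factorial (r + s) : ℝ)) *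
    ((((1 : Matrix (Fin m) (Fin m) (Polynomial (Polynomial ℝ)))
        + (Polynomial.X : Polynomial (Polynomial ℝ)) •
            χ.map (fun a => Polynomial.C (Polynomial.C a))
        + (Polynomial.C Polynomial.X : Polynomial (Polynomial ℝ)) •
            χb.map (fun a => Polynomial.C (Polynomial.C a))).det).coeff r).coeff s

open Polynomial Finset

theorem Polynomial.coeff_one_add_C_mul_X_pow {R : Type*} [CommSemiring R] (c : R) (k i : ℕ) :
    ((1 + C c * X) ^ k).coeff i = k.choose i * c ^ i := by
  rw [add_comm, add_pow, finsetSum_coeff]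
  simp only [one_pow, mul_one, mul_pow, ← C_pow, ← C_eq_natCast, mul_comm _ (C _), coeff_C_mul,
    coeff_X_pow, mul_ite, mul_zero]
  rw [sum_ite_eq, ite_eq_left_iff]
  intro hi
  rw [Nat.choose_eq_zero_of_lt (by simpa [Nat.lt_succ_iff] using hi), Nat.cast_zero, zero_mul]

theorem hasDerivAt_coeff_X_pow_mul_one_add_C_mul_X_pow {𝕜 : Type*} [NontriviallyNormedField 𝕜]
    (j k K : ℕ) :
    HasDerivAt (fun t : 𝕜 => (X ^ j * (1 + C t * X) ^ k).coeff K)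
      (if j + 1 = K then (k : 𝕜) else 0) 0 := by
  simp_rw [coeff_X_pow_mul', coeff_one_add_C_mul_X_pow]
  by_cases hjK : j ≤ K
  · simp only [if_pos hjK]
    refine ((hasDerivAt_pow (K - j) (0 : 𝕜)).const_mul (k.choose (K - j) : 𝕜)).congr_deriv ?_
    obtain h0 | h1 | h2 : K - j = 0 ∨ K - j = 1 ∨ 2 ≤ K - j := by omega
    · simp [h0, show j + 1 ≠ K by omega]
    · simp [h1, show j + 1 = K by omega]
    · simp [show j + 1 ≠ K by omega, zero_pow (show K - j - 1 ≠ 0 by omega)]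
  · simpa only [if_neg hjK, show j + 1 ≠ K by omega, if_false] using hasDerivAt_const (0 : 𝕜) 0

section Homogenize

variable {R : Type*} [CommRing R] {n : Type*} [Fintype n] [DecidableEq n]

theorem Matrix.isHomogeneous_det {σ : Type*} (M : Matrix n n (MvPolynomial σ R))
    (hM : ∀ i j, (M i j).IsHomogeneous 1) : M.det.IsHomogeneous (Fintype.card n) := by
  rw [det_apply']
  refine MvPolynomial.IsHomogeneous.sum _ _ _ fun e _ => ?_
  have hsign : ((Equiv.Perm.sign e : ℤ) : MvPolynomial σ R).IsHomogeneous 0 := by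
    rw [← map_intCast (MvPolynomial.C (σ := σ) (R := R))]
    exact MvPolynomial.isHomogeneous_C _ _
  have := hsign.mul (MvPolynomial.IsHomogeneous.prod univ (fun i => M (e i) i) (fun _ => 1)
    fun i _ => hM _ _)
  rwa [sum_const, smul_eq_mul, mul_one, zero_add, card_univ] at this

theorem Matrix.homogenize_det_one_add_X_smul (M : Matrix n n R) :
    (det (1 + (X : R[X]) • M.map C)).homogenize (Fintype.card n) =
      det ((MvPolynomial.X 1 : MvPolynomial (Fin 2) R) • (1 : Matrix n n _) +
        (MvPolynomial.X 0 : MvPolynomial (Fin 2) R) • M.map MvPolynomial.C) := by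
  apply homogenize_eq_of_isHomogeneous
  · refine isHomogeneous_det _ fun i j => ?_
    simp only [add_apply, smul_apply, one_apply, map_apply, smul_eq_mul, mul_ite, mul_one,
      mul_zero]
    refine .add ?_ (by rw [mul_comm]; exact MvPolynomial.isHomogeneous_C_mul_X _ _)
    split_ifs
    exacts [MvPolynomial.isHomogeneous_X R 1, MvPolynomial.isHomogeneous_zero _ _ _]
  · rw [AlgHom.map_det]
    refine congrArg det (Matrix.ext fun i j => ?_)
    simp only [AlgHom.mapMatrix_apply, map_apply, add_apply, smul_apply, one_apply, smul_eq_mul]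
    split_ifs <;> simp only [map_add, map_mul, MvPolynomial.aeval_X, MvPolynomial.aeval_C,
      Polynomial.algebraMap_eq, cons_val_zero, cons_val_one, mul_one, mul_zero, zero_add]

theorem Matrix.det_smul_one_add_smul {S : Type*} [CommRing S] [Algebra R S] (M : Matrix n n R)
    (u v : S) :
    det (u • (1 : Matrix n n S) + v • M.map (algebraMap R S)) =
      ∑ jk ∈ antidiagonal (Fintype.card n),
        algebraMap R S ((det (1 + (X : R[X]) • M.map C)).coeff jk.1) * v ^ jk.1 * u ^ jk.2 := by
  have h := congrArg (MvPolynomial.aeval ![v, u]) (homogenize_det_one_add_X_smul M)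
  rw [AlgHom.map_det] at h
  convert h.symm using 2
  · refine Matrix.ext fun i j => ?_
    simp only [AlgHom.mapMatrix_apply, map_apply, add_apply, smul_apply, one_apply, smul_eq_mul]
    split_ifs <;> simp
  · simp [homogenize, MvPolynomial.aeval_monomial, Finsupp.prod_fintype, mul_assoc]

end Homogenize

namespace Polynomial

variable {R : Type*} [CommRing R]

/-- The substitution `ȳ ↦ y ȳ` on `R[ȳ][y]`, with `ȳ` the inner and `y` the outer variable. -/
noncomputable def shear : R[X][X] →+* R[X][X] :=
  eval₂RingHom (eval₂RingHom (C.comp C) (X * C X)) X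

@[simp] theorem shear_X : shear (X : R[X][X]) = X := eval₂_X _ _

@[simp] theorem shear_C_X : shear (C X : R[X][X]) = X * C X := by
  simp [shear]

@[simp] theorem shear_C_C (a : R) : shear (C (C a) : R[X][X]) = C (C a) := by
  simp [shear]

theorem coeff_coeff_shear (P : R[X][X]) (a b : ℕ) :
    ((shear P).coeff (a + b)).coeff b = (P.coeff a).coeff b := by
  induction P using Polynomial.induction_on' with
  | add p q hp hq => simp [hp, hq]
  | monomial a' q =>
    induction q using Polynomial.induction_on' with
    | add p q hp hq => simp_all [map_add]
    | monomial b' c =>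
      have hshear : shear (monomial a' (monomial b' c)) = monomial (a' + b') (monomial b' c) := by
        simp only [← C_mul_X_pow_eq_monomial, map_mul, map_pow, shear_X, shear_C_X, shear_C_C]
        ring
      rw [hshear]
      by_cases hb : b' = b
      · subst hb
        simp only [coeff_monomial, add_left_inj]
      · simp only [coeff_monomial, apply_ite (coeff · b), if_neg hb, coeff_zero, ite_self]

end Polynomial

section MixedDet

variable {R : Type*} [CommRing R] {n : Type*} [Fintype n] [DecidableEq n]

noncomputable def mixedDet (χ χb : Matrix n n R) : R[X][X] :=
  det (1 + (X : R[X][X]) • χ.map (fun a => C (C a)) + (C X : R[X][X]) • χb.map (fun a => C (C a)))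

theorem mixedP_eq {m : ℕ} (r s : ℕ) (χ χb : Matrix (Fin m) (Fin m) ℝ) :
    mixedP r s χ χb =
      (r.factorial * s.factorial / (r + s).factorial : ℝ) * ((mixedDet χ χb).coeff r).coeff s :=
  rfl

theorem shear_mixedDet (χ χb : Matrix n n R) :
    shear (mixedDet χ χb) = det (1 + (X : R[X][X]) • (χ.map C + (X : R[X]) • χb.map C).map C) := by
  rw [mixedDet, RingHom.map_det]
  refine congrArg det (Matrix.ext fun i j => ?_)
  simp only [RingHom.mapMatrix_apply, map_apply, Matrix.add_apply, Matrix.smul_apply, one_apply,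
    smul_eq_mul]
  split_ifs <;> simp [C_mul] <;> ring

theorem shear_mixedDet_add_smul_one (χ χb : Matrix n n R) (t : R) :
    shear (mixedDet (χ + t • 1) χb) = ∑ jk ∈ antidiagonal (Fintype.card n),
      C ((shear (mixedDet χ χb)).coeff jk.1) * X ^ jk.1 * (1 + C (C t) * X) ^ jk.2 := by
  have h := det_smul_one_add_smul (S := R[X][X]) (χ.map C + (X : R[X]) • χb.map C)
    (1 + C (C t) * X) X
  rw [Polynomial.algebraMap_eq] at h
  rw [shear_mixedDet, shear_mixedDet, ← h]
  refine congrArg det (Matrix.ext fun i j => ?_)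
  simp only [map_apply, Matrix.add_apply, Matrix.smul_apply, one_apply, smul_eq_mul]
  split_ifs <;> simp only [mul_one, mul_zero, add_zero, map_add]
  ring

theorem coeff_coeff_mixedDet_add_smul_one (χ χb : Matrix n n R) (t : R) (r s : ℕ) :
    ((mixedDet (χ + t • 1) χb).coeff r).coeff s = ∑ jk ∈ antidiagonal (Fintype.card n),
      ((shear (mixedDet χ χb)).coeff jk.1).coeff s *
        (X ^ jk.1 * (1 + C t * X) ^ jk.2).coeff (r + s) := by
  rw [← coeff_coeff_shear, shear_mixedDet_add_smul_one, finsetSum_coeff, finsetSum_coeff]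
  refine sum_congr rfl fun jk _ => ?_
  have hmap : (X ^ jk.1 * (1 + C (C t) * X) ^ jk.2 : R[X][X]) =
      (X ^ jk.1 * (1 + C t * X) ^ jk.2).map C := by
    simp
  rw [mul_assoc, hmap, coeff_C_mul, coeff_map, coeff_mul_C]

theorem hasDerivAt_coeff_coeff_mixedDet_add_smul_one {𝕜 : Type*} [NontriviallyNormedField 𝕜]
    (χ χb : Matrix n n 𝕜) {r s : ℕ} (hr : 1 ≤ r) (hrs : r + s ≤ Fintype.card n) :
    HasDerivAt (fun t : 𝕜 => ((mixedDet (χ + t • 1) χb).coeff r).coeff s)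
      ((Fintype.card n - (r + s - 1) : ℕ) * ((mixedDet χ χb).coeff (r - 1)).coeff s) 0 := by
  simp_rw [coeff_coeff_mixedDet_add_smul_one]
  refine (HasDerivAt.fun_sum fun jk _ => (hasDerivAt_coeff_X_pow_mul_one_add_C_mul_X_pow
    jk.1 jk.2 (r + s)).const_mul (((shear (mixedDet χ χb)).coeff jk.1).coeff s)).congr_deriv ?_
  rw [sum_eq_single_of_mem (r + s - 1, Fintype.card n - (r + s - 1))
    (HasAntidiagonal.mem_antidiagonal.2 (by omega))]
  · rw [if_pos (by omega), show r + s - 1 = r - 1 + s by omega, coeff_coeff_shear, mul_comm]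
  · rintro ⟨j, k⟩ hjk hne
    rw [HasAntidiagonal.mem_antidiagonal] at hjk
    rw [if_neg, mul_zero]
    intro hj
    exact hne (Prod.ext (by dsimp only at hj ⊢; omega) (by dsimp only at hj hjk ⊢; omega))

end MixedDet

theorem statement2_general (n r s : ℕ) (hr : 1 ≤ r)
    (χ χb : Matrix (Fin (n-1)) (Fin (n-1)) ℝ)
    (hrs : r + s ≤ n - 1) :
    deriv (fun t : ℝ =>
        mixedP r s (χ + t • (1 : Matrix (Fin (n-1)) (Fin (n-1)) ℝ)) χb) 0 =
      (r : ℝ) * ((n : ℝ) - ((r : ℝ) + (s : ℝ))) / ((r : ℝ) + (s : ℝ)) *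
        mixedP (r-1) s χ χb := by
  have hderiv := hasDerivAt_coeff_coeff_mixedDet_add_smul_one χ χb hr (by simpa using hrs)
  have hcard : ((Fintype.card (Fin (n - 1)) - (r + s - 1) : ℕ) : ℝ) = n - (r + s) := by
    rw [Fintype.card_fin, show n - 1 - (r + s - 1) = n - (r + s) by omega,
      Nat.cast_sub (by omega)]
    push_cast
    ring
  have hfact : (r.factorial * s.factorial / (r + s).factorial : ℝ) =
      r / (r + s) * ((r - 1).factorial * s.factorial / (r - 1 + s).factorial) := by
    obtain ⟨r, rfl⟩ : ∃ r', r = r' + 1 := ⟨r - 1, by omega⟩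
    rw [Nat.add_sub_cancel, add_right_comm, Nat.factorial_succ, Nat.factorial_succ]
    push_cast
    field_simp
    ring
  simp_rw [mixedP_eq]
  rw [(hderiv.const_mul _).deriv, hcard, hfact]
  ring

/-- the directional derivative of `P_{r,s}` at `χ` in the direction of the
identity matrix equals `(r (n-(r+s))/(r+s)) · P_{r-1,s}(χ,χ̄)`. -/
theorem statement2 (n r s : ℕ) (hn : 2 ≤ n) (hr : 1 ≤ r)
    (χ χb : Matrix (Fin (n-1)) (Fin (n-1)) ℝ) (hχ : χ.IsSymm) (hχb : χb.IsSymm)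
    (hrs : r + s ≤ n - 1) :
    deriv (fun t : ℝ =>
        mixedP r s (χ + t • (1 : Matrix (Fin (n-1)) (Fin (n-1)) ℝ)) χb) 0 =
      (r : ℝ) * ((n : ℝ) - ((r : ℝ) + (s : ℝ))) / ((r : ℝ) + (s : ℝ)) *
        mixedP (r-1) s χ χb :=
  statement2_general n r s hr χ χb hrs
end

section
/- Let n ≥ 3 and let s be an integer with 1 ≤ s ≤ n−2. Let χ and χ̄ be real symmetric (n−1)×(n−1) matrices both lying in the Gårding cone Γ_{s+1}, and suppose that tr(χ̄ · T̄_{0,s}(χ̄) · χ) ≥ (s/(n−1))·σ_s(χ̄)·tr(χ). Then (n−1−s)·σ_s(χ̄)·tr(χ) ≥ (n−1)·(s+1)·P_{1,s}(χ,χ̄). -/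
/-!
Put `Q = I + ȳ χ̄`. By Jacobi's formula the part of `det (Q + y χ)` linear in `y` is
`tr (adj Q · χ)`, and the Newton recursion `adj Q = det Q · I − ȳ χ̄ · adj Q` turns its
`ȳ^s`-coefficient into `(s+1) P_{1,s}(χ, χ̄) = σ_s(χ̄) tr χ − [ȳ^{s-1}] tr (χ̄ · adj Q · χ)`.
Jacobi's formula applied to `t ↦ σ_s(χ̄ + t H)` with the symmetric direction `H = χ χ̄ + χ̄ χ`,
together with `χ̄ · adj Q = adj Q · χ̄`, identifies the last term with `tr (χ̄ T̄_{0,s}(χ̄) χ)`.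
The claimed inequality is then the hypothesis on `tr (χ̄ T̄_{0,s}(χ̄) χ)` multiplied by `n − 1`.
-/

open Matrix

/-- A real symmetric matrix lies in the Gårding cone `Γ_k` iff the elementary symmetric
functions `σ_1, …, σ_k` of its eigenvalues are all positive. -/
def matGamma {m : ℕ} (k : ℕ) (W : Matrix (Fin m) (Fin m) ℝ) : Prop :=
  ∀ j : ℕ, 1 ≤ j → j ≤ k → 0 < sigmaM j W

open Polynomial

section Determinant

variable {R : Type*} [CommRing R] {n : Type*} [Fintype n] [DecidableEq n]

theorem Polynomial.coeff_one_eq_eval_derivative (p : R[X]) :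
    p.coeff 1 = (derivative p).eval 0 := by
  rw [← taylor_coeff_one, taylor_zero]

theorem Matrix.det_updateCol_eq_sum_adjugate_mul (M : Matrix n n R) (j : n) (v : n → R) :
    (M.updateCol j v).det = ∑ k, adjugate M j k * v k := by
  rw [← cramer_apply, cramer_eq_adjugate_mulVec]
  rfl

theorem Matrix.coeff_one_det_map_C_add_X_smul (M N : Matrix n n R) :
    (det (M.map C + (X : R[X]) • N.map C)).coeff 1 = trace (adjugate M * N) := by
  have entry : ∀ i j, (M.map C + (X : R[X]) • N.map C) i j = C (M i j) + X * C (N i j) :=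
    fun _ _ => rfl
  have prod_updateCol : ∀ (σ : Equiv.Perm n) (i : n),
      ∏ j, M.updateCol i (fun k => N k i) (σ j) j
        = N (σ i) i * ∏ j ∈ Finset.univ.erase i, M (σ j) j := by
    intro σ i
    rw [← Finset.mul_prod_erase _ _ (Finset.mem_univ i), updateCol_self]
    congr 1
    exact Finset.prod_congr rfl fun j hj => by rw [updateCol_ne (Finset.ne_of_mem_erase hj)]
  calc (det (M.map C + (X : R[X]) • N.map C)).coeff 1
      = ∑ σ : Equiv.Perm n, ((Equiv.Perm.sign σ : ℤ) : R) *
          ∑ i, N (σ i) i * ∏ j ∈ Finset.univ.erase i, M (σ j) j := by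
        simp only [coeff_one_eq_eval_derivative, det_apply', entry, derivative_sum,
          eval_finsetSum, derivative_intCast_mul, eval_mul, eval_intCast, derivative_prod_finset,
          X_mul_C, eval_prod, derivative_add, derivative_C, derivative_C_mul_X, eval_add, eval_C,
          eval_X, zero_add, mul_zero, add_zero]
        simp only [mul_comm]
    _ = ∑ i, (M.updateCol i (fun k => N k i)).det := by
        simp only [det_apply', prod_updateCol, Finset.mul_sum]
        exact Finset.sum_comm
    _ = trace (adjugate M * N) := by
        simp only [det_updateCol_eq_sum_adjugate_mul, trace, diag_apply, mul_apply]

theorem Matrix.commute_map_C_adjugate_one_add_X_smul (A : Matrix n n R) :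
    Commute (A.map (C : R → R[X])) (adjugate (1 + (X : R[X]) • A.map C)) := by
  set A' := A.map (C : R → R[X])
  set Q := 1 + (X : R[X]) • A'
  have h : (X : R[X]) • (A' * adjugate Q) = (X : R[X]) • (adjugate Q * A') := by
    have := (mul_adjugate Q).trans (adjugate_mul Q).symm
    rwa [add_mul, mul_add, one_mul, mul_one, smul_mul_assoc, mul_smul_comm, add_right_inj] at this
  exact IsSMulRegular.pi (fun _ => IsSMulRegular.pi fun _ => isRegular_X.left.isSMulRegular) h

/-- `adj (I + X A) = ∑ₖ Xᵏ Tₖ(A)` generates the Newton tensors of `A`; this is their recursion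
`Tₖ = σₖ I − A Tₖ₋₁`. -/
theorem Matrix.adjugate_one_add_X_smul (A : Matrix n n R) :
    adjugate (1 + (X : R[X]) • A.map C)
      = det (1 + (X : R[X]) • A.map C) • 1
        - (X : R[X]) • (A.map C * adjugate (1 + (X : R[X]) • A.map C)) := by
  rw [eq_sub_iff_add_eq, ← mul_adjugate, add_mul, one_mul, smul_mul_assoc]

theorem Matrix.trace_adjugate_one_add_X_smul_mul (A B : Matrix n n R) :
    trace (adjugate (1 + (X : R[X]) • A.map C) * B.map C)
      = C (trace B) * det (1 + (X : R[X]) • A.map C)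
        - X * trace (A.map C * adjugate (1 + (X : R[X]) • A.map C) * B.map C) := by
  nth_rewrite 1 [adjugate_one_add_X_smul]
  rw [sub_mul, smul_mul_assoc, one_mul, smul_mul_assoc, trace_sub, trace_smul, trace_smul,
    smul_eq_mul, smul_eq_mul, AddMonoidHom.map_trace, mul_comm, mul_assoc]

theorem Matrix.trace_adjugate_one_add_X_smul_mul_anticomm (A B : Matrix n n R) :
    trace (adjugate (1 + (X : R[X]) • A.map C) * (B * A + A * B).map C)
      = 2 * trace (A.map C * adjugate (1 + (X : R[X]) • A.map C) * B.map C) := by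
  set A' := A.map (C : R → R[X])
  set B' := B.map (C : R → R[X])
  set T := adjugate (1 + (X : R[X]) • A')
  have hmap : (B * A + A * B).map (C : R → R[X]) = B' * A' + A' * B' := by
    simp only [A', B', ← RingHom.mapMatrix_apply, map_add, map_mul]
  have hBA : trace (T * (B' * A')) = trace (A' * T * B') := by
    rw [← mul_assoc, trace_mul_cycle]
  have hAB : trace (T * (A' * B')) = trace (A' * T * B') := by
    rw [← mul_assoc, (commute_map_C_adjugate_one_add_X_smul A).eq]
  rw [hmap, mul_add, trace_add, hBA, hAB, two_mul]

end Determinant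

theorem Matrix.trace_mul_anticomm_of_isSymm {m R : Type*} [Fintype m] [CommRing R]
    {T A B : Matrix m m R} (hT : T.IsSymm) (hA : A.IsSymm) (hB : B.IsSymm) :
    trace (T * (B * A + A * B)) = 2 * trace (A * T * B) := by
  have hBA : trace (T * (B * A)) = trace (A * T * B) := by
    rw [← mul_assoc, trace_mul_cycle]
  have hAB : trace (T * (A * B)) = trace (A * T * B) := by
    rw [← trace_transpose, transpose_mul, transpose_mul, hT.eq, hA.eq, hB.eq, trace_mul_cycle,
      mul_assoc, hBA]
  rw [mul_add, trace_add, hBA, hAB, two_mul]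

theorem Polynomial.deriv_coeff_eval_C (P : ℝ[X][X]) (k : ℕ) :
    deriv (fun t : ℝ => (P.eval (C t)).coeff k) 0 = (P.coeff 1).coeff k := by
  set p : ℝ[X] := ∑ j ∈ P.support, C ((P.coeff j).coeff k) * X ^ j
  have hp : (fun t : ℝ => (P.eval (C t)).coeff k) = fun t => p.eval t := by
    funext t
    rw [eval_eq_sum, Polynomial.sum, finsetSum_coeff, eval_finsetSum]
    simp only [← C_pow, coeff_mul_C, eval_mul, eval_C, eval_pow, eval_X]
  rw [hp, Polynomial.deriv, ← coeff_one_eq_eval_derivative]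
  simp only [p, finsetSum_coeff, coeff_C_mul_X_pow, Finset.sum_ite_eq]
  split_ifs with h
  · rfl
  · rw [notMem_support_iff.mp h, coeff_zero]

theorem sigmaM_add_smul {m : ℕ} {R : Type*} [CommRing R] (k : ℕ) (A H : Matrix (Fin m) (Fin m) R)
    (t : R) :
    sigmaM k (A + t • H) = ((det ((1 + (X : R[X]) • A.map C).map C
      + (X : R[X][X]) • ((X : R[X]) • H.map C).map C)).eval (C t)).coeff k := by
  rw [sigmaM, ← coe_evalRingHom, RingHom.map_det]
  congr 2
  refine Matrix.ext fun i j => ?_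
  by_cases hij : i = j <;> simp [one_apply, hij] <;> ring

theorem deriv_sigmaM_add_smul {m : ℕ} (A H : Matrix (Fin m) (Fin m) ℝ) (k : ℕ) :
    deriv (fun t : ℝ => sigmaM (k + 1) (A + t • H)) 0
      = (trace (adjugate (1 + (X : ℝ[X]) • A.map C) * H.map C)).coeff k := by
  simp_rw [sigmaM_add_smul]
  rw [deriv_coeff_eval_C, coeff_one_det_map_C_add_X_smul, mul_smul_comm, trace_smul, smul_eq_mul,
    coeff_X_mul]

theorem add_one_mul_mixedP_one {m : ℕ} (A B : Matrix (Fin m) (Fin m) ℝ) {s : ℕ} (hs : s ≠ 0) :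
    ((s : ℝ) + 1) * mixedP 1 s B A
      = trace B * sigmaM s A - deriv (fun t : ℝ => sigmaM s (A + t • (B * A + A * B))) 0 / 2 := by
  obtain ⟨k, rfl⟩ := Nat.exists_eq_add_one_of_ne_zero hs
  have hfactorial : (((k + 1 : ℕ) : ℝ) + 1) * ((Nat.factorial 1 * Nat.factorial (k + 1) : ℝ)
      / (Nat.factorial (1 + (k + 1)) : ℝ)) = 1 := by
    rw [Nat.add_comm 1, Nat.factorial_succ (k + 1), Nat.factorial_one]
    push_cast
    field_simp
  have hmatrix : (1 : Matrix (Fin m) (Fin m) ℝ[X][X]) + (X : ℝ[X][X]) • B.map (fun a => C (C a))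
        + (C X : ℝ[X][X]) • A.map (fun a => C (C a))
      = (1 + (X : ℝ[X]) • A.map C).map C + (X : ℝ[X][X]) • (B.map C).map C := by
    refine Matrix.ext fun i j => ?_
    by_cases hij : i = j <;> simp [one_apply, hij] <;> ring
  rw [mixedP, ← mul_assoc, hfactorial, one_mul, hmatrix, coeff_one_det_map_C_add_X_smul,
    trace_adjugate_one_add_X_smul_mul, deriv_sigmaM_add_smul,
    trace_adjugate_one_add_X_smul_mul_anticomm, coeff_sub, coeff_C_mul, coeff_X_mul]
  simp [sigmaM]

theorem statement8_general (n s : ℕ) (hn : 3 ≤ n) (hs1 : 1 ≤ s)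
    (χ χb T : Matrix (Fin (n-1)) (Fin (n-1)) ℝ)
    (hχ : χ.IsSymm) (hχb : χb.IsSymm) (hT : T.IsSymm)
    (hTgrad : ∀ H : Matrix (Fin (n-1)) (Fin (n-1)) ℝ, H.IsSymm →
      deriv (fun t : ℝ => sigmaM s (χb + t • H)) 0 = (T * H).trace)
    (htr : (χb * T * χ).trace ≥ ((s : ℝ) / ((n : ℝ) - 1)) * sigmaM s χb * χ.trace) :
    ((n : ℝ) - 1 - (s : ℝ)) * sigmaM s χb * χ.trace ≥
      ((n : ℝ) - 1) * ((s : ℝ) + 1) * mixedP 1 s χ χb := by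
  have hH : (χ * χb + χb * χ).IsSymm := by
    rw [IsSymm, transpose_add, transpose_mul, transpose_mul, hχ.eq, hχb.eq, add_comm]
  have hP : ((s : ℝ) + 1) * mixedP 1 s χ χb = χ.trace * sigmaM s χb - (χb * T * χ).trace := by
    rw [add_one_mul_mixedP_one χb χ (by omega), hTgrad _ hH,
      trace_mul_anticomm_of_isSymm hT hχb hχ]
    ring
  have hν : (0 : ℝ) < n - 1 := by
    have : (3 : ℝ) ≤ n := by exact_mod_cast hn
    linarith
  rw [ge_iff_le, div_mul_eq_mul_div, div_mul_eq_mul_div, div_le_iff₀ hν] at htr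
  rw [ge_iff_le, mul_assoc, hP]
  linarith

/-- if `χ, χ̄ ∈ Γ_{s+1}` and `tr(χ̄·T̄_{0,s}(χ̄)·χ) ≥ (s/(n−1))·σ_s(χ̄)·tr(χ)`,
where `T̄_{0,s}(χ̄)` is the (unique symmetric) gradient of `σ_s` at `χ̄`, then
`(n−1−s)·σ_s(χ̄)·tr(χ) ≥ (n−1)·(s+1)·P_{1,s}(χ,χ̄)`. -/
theorem statement8 (n s : ℕ) (hn : 3 ≤ n) (hs1 : 1 ≤ s) (hs2 : s ≤ n - 2)
    (χ χb T : Matrix (Fin (n-1)) (Fin (n-1)) ℝ)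
    (hχ : χ.IsSymm) (hχb : χb.IsSymm) (hT : T.IsSymm)
    (hTgrad : ∀ H : Matrix (Fin (n-1)) (Fin (n-1)) ℝ, H.IsSymm →
      deriv (fun t : ℝ => sigmaM s (χb + t • H)) 0 = (T * H).trace)
    (hG : matGamma (s+1) χ) (hGb : matGamma (s+1) χb)
    (htr : (χb * T * χ).trace ≥ ((s : ℝ) / ((n : ℝ) - 1)) * sigmaM s χb * χ.trace) :
    ((n : ℝ) - 1 - (s : ℝ)) * sigmaM s χb * χ.trace ≥
      ((n : ℝ) - 1) * ((s : ℝ) + 1) * mixedP 1 s χ χb :=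
  statement8_general n s hn hs1 χ χb T hχ hχb hT hTgrad htr
end

section
/- Let n ≥ 3 and let s be an integer with 1 ≤ s ≤ n−2. If λ ∈ ℝ^{n−1} lies in the Gårding cone Γ_{s+1}, then (n−1)·Σ_{i=1}^{n−1} λ_i²·σ_{s−1}(λ|i) ≥ s·σ₁(λ)·σ_s(λ). -/
open Matrix

/-- The `q`-th elementary symmetric polynomial of the entries of `lam` indexed by `S`. -/
noncomputable def esymmOn {m : ℕ} (S : Finset (Fin m)) (q : ℕ) (lam : Fin m → ℝ) : ℝ :=
  ∑ t ∈ S.powersetCard q, ∏ i ∈ t, lam i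

/-- The Gårding cone `Γ_k` for vectors: `σ_1(λ) > 0, …, σ_k(λ) > 0`. -/
def gammaVec {m : ℕ} (k : ℕ) (lam : Fin m → ℝ) : Prop :=
  ∀ j : ℕ, 1 ≤ j → j ≤ k → 0 < esymmOn Finset.univ j lam

/-!
Write `m = n - 1` and `σ_j` for the elementary symmetric functions of `λ`. Expanding
`σ_{r+1} = σ_{r+1}(λ|i) + λ_i σ_r(λ|i)` and double counting give
`∑ λ_i² σ_{s-1}(λ|i) = σ_1 σ_s - (s + 1) σ_{s+1}`, so the claim is the Maclaurin-type inequality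
`m (s + 1) σ_{s+1} ≤ (m - s) σ_1 σ_s` on `Γ_{s+1}`. It is proved by induction on `m`. Replacing `λ`
by the `m - 1` roots of the derivative of `∏ (X - λ_i)`, which are real by Rolle's theorem, keeps
every normalised mean `σ_r / C(m, r)` unchanged, hence stays in `Γ_{s+1}`. In the base case
`m = s + 1` the cone `Γ_m` is the positive orthant and the inequality is the AM–HM inequality
`m² σ_m ≤ σ_1 σ_{m-1}`.
-/

open Polynomial

namespace Multiset

section CommSemiring

variable {R : Type*} [CommSemiring R]

theorem esymm_zero (s : Multiset R) : s.esymm 0 = 1 := by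
  simp [esymm, powersetCard_zero_left]

theorem esymm_one (s : Multiset R) : s.esymm 1 = s.sum := by
  simp [esymm, powersetCard_one, map_map]

theorem esymm_cons_succ (a : R) (s : Multiset R) (r : ℕ) :
    (a ::ₘ s).esymm (r + 1) = s.esymm (r + 1) + a * s.esymm r := by
  simp [esymm, powersetCard_cons, map_map, ← sum_map_mul_left]

theorem esymm_eq_zero_of_card_lt {s : Multiset R} {r : ℕ} (h : card s < r) : s.esymm r = 0 := by
  simp [esymm, powersetCard_eq_empty _ h]

end CommSemiring

section LinearOrderedRing

variable {R : Type*} [CommRing R] [LinearOrder R] [IsStrictOrderedRing R]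

theorem esymm_nonneg {s : Multiset R} (hs : ∀ x ∈ s, 0 ≤ x) (r : ℕ) : 0 ≤ s.esymm r :=
  sum_nonneg fun _ hx ↦ by
    obtain ⟨t, ht, rfl⟩ := mem_map.1 hx
    exact prod_nonneg fun a ha ↦ hs a (mem_of_le (mem_powersetCard.1 ht).1 ha)

theorem pos_of_esymm_pos {s : Multiset R} (hs : ∀ j, 1 ≤ j → j ≤ card s → 0 < s.esymm j) :
    ∀ x ∈ s, 0 < x := by
  intro x hx
  by_contra! hx0
  have hroot : ((s.map (X + C ·)).prod).eval (-x) = 0 := by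
    rw [eval_multiset_prod]
    exact prod_eq_zero (mem_map.2 ⟨_, mem_map_of_mem _ hx, by simp⟩)
  rw [prod_X_add_C_eq_sum_esymm, eval_finsetSum] at hroot
  refine hroot.not_gt (Finset.sum_pos' (fun j hj ↦ ?_) ⟨card s, by simp, ?_⟩)
  · have : 0 ≤ s.esymm j := by
      rcases j.eq_zero_or_pos with rfl | hj0
      · simp [esymm_zero]
      · exact (hs j hj0 (Nat.lt_succ_iff.1 (Finset.mem_range.1 hj))).le
    simpa using mul_nonneg this (pow_nonneg (neg_nonneg.2 hx0) _)
  · simpa using hs _ (card_pos_iff_exists_mem.2 ⟨x, hx⟩) le_rfl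

theorem sq_card_mul_esymm_card_le {s : Multiset R} (hs : ∀ x ∈ s, 0 ≤ x) :
    (card s : R) ^ 2 * s.esymm (card s) ≤ s.esymm 1 * s.esymm (card s - 1) := by
  induction s using Multiset.induction with
  | empty => simp [esymm_one]
  | cons a s ih =>
    have ha : 0 ≤ a := hs a (mem_cons_self a s)
    have hs' : ∀ x ∈ s, 0 ≤ x := fun x hx ↦ hs x (mem_cons_of_mem hx)
    specialize ih hs'
    rcases hc : card s with _ | c
    · simp [card_eq_zero.1 hc, esymm_zero, esymm_one]
    rw [hc, Nat.add_sub_cancel] at ih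
    push_cast at ih
    have e_top : (a ::ₘ s).esymm (c + 2) = a * s.esymm (c + 1) := by
      rw [esymm_cons_succ, esymm_eq_zero_of_card_lt (by omega), zero_add]
    have e_one : (a ::ₘ s).esymm 1 = a + s.esymm 1 := by
      rw [esymm_one, esymm_one, sum_cons]
    simp only [card_cons, hc, Nat.add_sub_cancel, e_top, e_one, esymm_cons_succ]
    have h1 := esymm_nonneg hs' 1
    have hc1 := esymm_nonneg hs' (c + 1)
    have hc0 := esymm_nonneg hs' c
    -- AM-GM on `e₁ e_{c+1}` and `a² e_c`, whose product dominates `((c + 1) a e_{c+1})²` by `ih`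
    have amgm : 2 * ((c + 1) * a * s.esymm (c + 1)) ≤
        s.esymm 1 * s.esymm (c + 1) + a ^ 2 * s.esymm c := by
      nlinarith [mul_le_mul_of_nonneg_left ih (mul_nonneg (sq_nonneg a) hc1),
        sq_nonneg (s.esymm 1 * s.esymm (c + 1) - a ^ 2 * s.esymm c),
        mul_nonneg h1 hc1, mul_nonneg (sq_nonneg a) hc0]
    push_cast
    nlinarith [mul_le_mul_of_nonneg_left ih ha]

end LinearOrderedRing

end Multiset

namespace Polynomial

theorem Splits.derivative_of_real {p : ℝ[X]} (hp : p.Splits) : p.derivative.Splits := by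
  rw [splits_iff_card_roots] at hp ⊢
  have := card_roots_le_derivative p
  exact le_antisymm (card_roots' _) (by rw [natDegree_derivative]; omega)

theorem Splits.natDegree_mul_esymm_roots_derivative {p : ℝ[X]} (hp : p.Splits) {r : ℕ}
    (hr : r < p.natDegree) :
    (p.natDegree : ℝ) * p.derivative.roots.esymm r =
      (p.natDegree - r : ℝ) * p.roots.esymm r := by
  set m := p.natDegree
  have hp0 : p.leadingCoeff ≠ 0 := leadingCoeff_ne_zero.2 (ne_zero_of_natDegree_gt hr)
  have hd : p.derivative.natDegree = m - 1 := natDegree_derivative p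
  have hlc : p.derivative.leadingCoeff = m * p.leadingCoeff := by
    rw [leadingCoeff, hd, coeff_derivative, Nat.sub_add_cancel (by omega), ← leadingCoeff,
      Nat.cast_sub (by omega)]
    push_cast
    ring
  have hcast : ((m - 1 - r : ℕ) : ℝ) + 1 = m - r := by
    rw [Nat.cast_sub (by omega), Nat.cast_pred (by omega)]
    ring
  have hcoeff := coeff_derivative p (m - 1 - r)
  rw [coeff_eq_esymm_roots_of_splits hp.derivative_of_real (by omega),
    coeff_eq_esymm_roots_of_splits hp (by omega), hlc, hd, hcast,
    show m - 1 - (m - 1 - r) = r by omega, show m - (m - 1 - r + 1) = r by omega] at hcoeff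
  have hunit : p.leadingCoeff * (-1) ^ r ≠ 0 := mul_ne_zero hp0 (pow_ne_zero _ (by norm_num))
  apply mul_left_cancel₀ hunit
  linear_combination hcoeff

end Polynomial

theorem Multiset.exists_card_mul_esymm_eq (s : Multiset ℝ) :
    ∃ t : Multiset ℝ, card t = card s - 1 ∧
      ∀ r < card s, (card s : ℝ) * t.esymm r = (card s - r : ℝ) * s.esymm r := by
  set p := (s.map (X - C ·)).prod
  have hp : p.Splits := Splits.multisetProd fun f hf ↦ by
    obtain ⟨a, -, rfl⟩ := mem_map.1 hf
    exact Splits.X_sub_C a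
  have hdeg : p.natDegree = card s := natDegree_multiset_prod_X_sub_C_eq_card s
  refine ⟨p.derivative.roots, ?_, fun r hr ↦ ?_⟩
  · rw [← hp.derivative_of_real.natDegree_eq_card_roots, natDegree_derivative, hdeg]
  · have := hp.natDegree_mul_esymm_roots_derivative (r := r) (hdeg ▸ hr)
    rwa [hdeg, roots_multiset_prod_X_sub_C] at this

theorem Multiset.card_mul_esymm_succ_le {s : Multiset ℝ} {k : ℕ} (hk : k < card s)
    (hpos : ∀ j, 1 ≤ j → j ≤ k + 1 → 0 < s.esymm j) :
    (card s : ℝ) * (k + 1) * s.esymm (k + 1) ≤ (card s - k : ℝ) * (s.esymm 1 * s.esymm k) := by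
  obtain ⟨m, hm⟩ : ∃ m, card s = m := ⟨_, rfl⟩
  rw [hm] at hk ⊢
  induction m, (hk : k + 1 ≤ m) using Nat.le_induction generalizing s with
  | base =>
    rw [Nat.succ_eq_add_one] at hm ⊢
    have h := sq_card_mul_esymm_card_le fun x hx ↦
      (pos_of_esymm_pos (fun j hj1 hj2 ↦ hpos j hj1 (hm ▸ hj2)) x hx).le
    rw [hm, Nat.add_sub_cancel] at h
    push_cast at h ⊢
    linarith
  | succ m hkm ih =>
    obtain ⟨t, ht, hrel⟩ := s.exists_card_mul_esymm_eq
    rw [hm, Nat.add_sub_cancel] at ht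
    simp only [hm] at hrel
    push_cast at hrel ⊢
    have htpos : ∀ j, 1 ≤ j → j ≤ k + 1 → 0 < t.esymm j := fun j hj1 hj2 ↦ by
      have hj : (j : ℝ) < m + 1 := by exact_mod_cast (by omega : j < m + 1)
      have := hrel j (by omega)
      have := hpos j hj1 hj2
      nlinarith
    have ih := ih htpos ht
    have h1 := hrel 1 (by omega)
    have hk0 := hrel k (by omega)
    have hk1 := hrel (k + 1) (by omega)
    push_cast at h1 hk1
    have hmk : (0 : ℝ) < m * (m - k) := by
      have : (k : ℝ) + 1 ≤ m := by exact_mod_cast hkm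
      nlinarith
    refine le_of_mul_le_mul_left ?_ hmk
    calc (m * (m - k) : ℝ) * ((m + 1) * (k + 1) * s.esymm (k + 1))
        = (m + 1) ^ 2 * (m * (k + 1) * t.esymm (k + 1)) := by
          linear_combination (-(m : ℝ) * (k + 1) * (m + 1)) * hk1
      _ ≤ (m + 1) ^ 2 * ((m - k) * (t.esymm 1 * t.esymm k)) := by gcongr
      _ = m * (m - k) * ((m + 1 - k) * (s.esymm 1 * s.esymm k)) := by
          linear_combination ((m : ℝ) - k) * ((m + 1) * t.esymm k * h1 + m * s.esymm 1 * hk0)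

theorem Finset.sum_filter_mem_powersetCard_succ {α M : Type*} [DecidableEq α] [AddCommMonoid M]
    {S : Finset α} {i : α} (hi : i ∈ S) (r : ℕ) (f : Finset α → M) :
    ∑ u ∈ (S.powersetCard (r + 1)).filter (i ∈ ·), f u =
      ∑ t ∈ (S.erase i).powersetCard r, f (insert i t) := by
  have hnotMem : ∀ t ∈ (S.erase i).powersetCard r, i ∉ t := fun t ht h ↦
    notMem_erase i S ((mem_powersetCard.1 ht).1 h)
  refine sum_nbij' (·.erase i) (insert i) (fun u hu ↦ ?_) (fun t ht ↦ ?_) (fun u hu ↦ ?_)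
    (fun t ht ↦ ?_) (fun t ht ↦ ?_)
  · simp only [mem_filter, mem_powersetCard] at hu ⊢
    exact ⟨erase_subset_erase i hu.1.1, by rw [card_erase_of_mem hu.2, hu.1.2, Nat.add_sub_cancel]⟩
  · have hit := hnotMem t ht
    simp only [mem_filter, mem_powersetCard] at ht ⊢
    exact ⟨⟨insert_subset hi (ht.1.trans (erase_subset i S)),
      by rw [card_insert_of_notMem hit, ht.2]⟩, mem_insert_self i t⟩
  · exact insert_erase (mem_filter.1 hu).2
  · exact erase_insert (hnotMem t ht)
  · rw [insert_erase (mem_filter.1 ht).2]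

section esymmOn

variable {m : ℕ}

theorem esymmOn_eq_esymm (S : Finset (Fin m)) (q : ℕ) (lam : Fin m → ℝ) :
    esymmOn S q lam = (S.val.map lam).esymm q :=
  (Finset.esymm_map_val lam S q).symm

theorem esymmOn_one (S : Finset (Fin m)) (lam : Fin m → ℝ) :
    esymmOn S 1 lam = ∑ i ∈ S, lam i := by
  simp [esymmOn, Finset.powersetCard_one]

theorem esymmOn_succ_of_mem {S : Finset (Fin m)} {i : Fin m} (hi : i ∈ S) (r : ℕ)
    (lam : Fin m → ℝ) :
    esymmOn S (r + 1) lam =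
      esymmOn (S.erase i) (r + 1) lam + lam i * esymmOn (S.erase i) r lam := by
  conv_lhs => rw [← Finset.insert_erase hi]
  rw [esymmOn_eq_esymm, Finset.insert_val_of_notMem (Finset.notMem_erase i S), Multiset.map_cons,
    Multiset.esymm_cons_succ, ← esymmOn_eq_esymm, ← esymmOn_eq_esymm]

theorem sum_mul_esymmOn_erase (S : Finset (Fin m)) (r : ℕ) (lam : Fin m → ℝ) :
    ∑ i ∈ S, lam i * esymmOn (S.erase i) r lam = (r + 1) * esymmOn S (r + 1) lam := by
  unfold esymmOn
  calc ∑ i ∈ S, lam i * ∑ t ∈ (S.erase i).powersetCard r, ∏ j ∈ t, lam j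
      = ∑ i ∈ S, ∑ u ∈ (S.powersetCard (r + 1)).filter (i ∈ ·), ∏ j ∈ u, lam j := by
        refine Finset.sum_congr rfl fun i hi ↦ ?_
        rw [Finset.sum_filter_mem_powersetCard_succ hi, Finset.mul_sum]
        refine Finset.sum_congr rfl fun t ht ↦ ?_
        rw [Finset.prod_insert fun h ↦ Finset.notMem_erase i S ((Finset.mem_powersetCard.1 ht).1 h)]
    _ = ∑ u ∈ S.powersetCard (r + 1), ∑ _i ∈ u, ∏ j ∈ u, lam j :=
        Finset.sum_comm' fun i u ↦ by
          simp only [Finset.mem_filter, Finset.mem_powersetCard]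
          exact ⟨fun ⟨_, hu, hi⟩ ↦ ⟨hi, hu⟩, fun ⟨hi, hu⟩ ↦ ⟨hu.1 hi, hu, hi⟩⟩
    _ = (r + 1) * ∑ u ∈ S.powersetCard (r + 1), ∏ j ∈ u, lam j := by
        rw [Finset.mul_sum]
        refine Finset.sum_congr rfl fun u hu ↦ ?_
        rw [Finset.sum_const, (Finset.mem_powersetCard.1 hu).2, nsmul_eq_mul]
        push_cast
        ring

theorem sum_sq_mul_esymmOn_erase (S : Finset (Fin m)) (r : ℕ) (lam : Fin m → ℝ) :
    ∑ i ∈ S, lam i ^ 2 * esymmOn (S.erase i) r lam =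
      esymmOn S 1 lam * esymmOn S (r + 1) lam - (r + 2) * esymmOn S (r + 2) lam := by
  have h : ∀ i ∈ S, lam i ^ 2 * esymmOn (S.erase i) r lam =
      lam i * esymmOn S (r + 1) lam - lam i * esymmOn (S.erase i) (r + 1) lam := fun i hi ↦ by
    rw [esymmOn_succ_of_mem hi]
    ring
  rw [Finset.sum_congr rfl h, Finset.sum_sub_distrib, ← Finset.sum_mul, ← esymmOn_one,
    sum_mul_esymmOn_erase]
  push_cast
  ring

end esymmOn

theorem statement9_general (n s : ℕ) (hs1 : 1 ≤ s) (hs2 : s ≤ n - 2)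
    (lam : Fin (n-1) → ℝ) (hlam : gammaVec (s+1) lam) :
    ((n : ℝ) - 1) * ∑ i : Fin (n-1), lam i ^ 2 * esymmOn (Finset.univ.erase i) (s-1) lam ≥
      (s : ℝ) * esymmOn Finset.univ 1 lam * esymmOn Finset.univ s lam := by
  obtain ⟨k, rfl⟩ := Nat.exists_eq_add_of_le' hs1
  have hcard : Multiset.card (Finset.univ.val.map lam) = n - 1 := by simp
  have hmac := Multiset.card_mul_esymm_succ_le (s := Finset.univ.val.map lam) (k := k + 1)
    (by omega) fun j hj1 hj2 ↦ esymmOn_eq_esymm _ _ _ ▸ hlam j hj1 hj2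
  simp only [← esymmOn_eq_esymm, hcard, Nat.cast_sub (by omega : 1 ≤ n)] at hmac
  rw [Nat.add_sub_cancel, sum_sq_mul_esymmOn_erase]
  push_cast at hmac ⊢
  linarith

/-- if `λ ∈ Γ_{s+1}`, then
`(n−1)·Σ_i λ_i²·σ_{s−1}(λ|i) ≥ s·σ₁(λ)·σ_s(λ)`. -/
theorem statement9 (n s : ℕ) (hn : 3 ≤ n) (hs1 : 1 ≤ s) (hs2 : s ≤ n - 2)
    (lam : Fin (n-1) → ℝ) (hlam : gammaVec (s+1) lam) :
    ((n : ℝ) - 1) * ∑ i : Fin (n-1), lam i ^ 2 * esymmOn (Finset.univ.erase i) (s-1) lam ≥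
      (s : ℝ) * esymmOn Finset.univ 1 lam * esymmOn Finset.univ s lam :=
  statement9_general n s hs1 hs2 lam hlam
end

section
/- Let n ≥ 1. On V = ℝ × ℝⁿ define, at each point p = (t,x), the alternating bilinear form Q_p(Y,Z) = (x·Yₓ)·Z₀ − (x·Zₓ)·Y₀ for Y = (Y₀,Yₓ), Z = (Z₀,Zₓ) ∈ ℝ × ℝⁿ (this is the two-form r dr ∧ dt on Minkowski spacetime), let η(X,Y) = −X₀·Y₀ + Xₓ·Yₓ be the Minkowski inner product, and set ξ = (−n, 0). Then: (i) for every p ∈ V and all X, Y, Z ∈ ℝ × ℝⁿ, the conformal Killing–Yano equation holds: (D_X Q)_p(Y,Z) + (D_Y Q)_p(X,Z) = (2/n)·( η(X,Y)·η(ξ,Z) − (1/2)·η(X,Z)·η(ξ,Y) − (1/2)·η(Y,Z)·η(ξ,X) ), where (D_X Q)_p(Y,Z) denotes the directional derivative at p, in the direction X, of the function p ↦ Q_p(Y,Z); and (ii) the divergence of Q equals ξ, i.e. for every p and every Z, −(D_{e₀}Q)_p(e₀, Z) + Σ_{i=1}^{n} (D_{e_i}Q)_p(e_i, Z) = η(ξ,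 Z), where e₀ = (1,0) and e₁,…,e_n = (0, standard basis of ℝⁿ). -/
open Matrix

/-- The Minkowski inner product on `ℝ × ℝⁿ`: `η(X,Y) = −X₀·Y₀ + Xₓ·Yₓ`. -/
noncomputable def mink {n : ℕ} (X Y : ℝ × (Fin n → ℝ)) : ℝ :=
  -(X.1 * Y.1) + X.2 ⬝ᵥ Y.2

/-- The two-form `Q = r dr ∧ dt` on Minkowski spacetime, at the point `p = (t,x)`:
`Q_p(Y,Z) = (x·Yₓ)·Z₀ − (x·Zₓ)·Y₀`. -/
noncomputable def Qform {n : ℕ} (p Y Z : ℝ × (Fin n → ℝ)) : ℝ :=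
  (p.2 ⬝ᵥ Y.2) * Z.1 - (p.2 ⬝ᵥ Z.2) * Y.1

/-- The covariant derivative `(D_X Q)_p(Y,Z)`: the directional derivative at `p` in the
direction `X` of `p ↦ Q_p(Y,Z)` (the flat connection on Minkowski space). -/
noncomputable def DQ {n : ℕ} (X p Y Z : ℝ × (Fin n → ℝ)) : ℝ :=
  deriv (fun u : ℝ => Qform (p + u • X) Y Z) 0

/-! `Q_p` is linear in the base point `p`, so `D_X Q = Q_X` and both claims are algebraic
identities for `Q`; in the divergence each spatial basis vector contributes `Z₀` and `e₀`
contributes nothing. -/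

section

variable {n : ℕ}

lemma Qform_add_smul (p X Y Z : ℝ × (Fin n → ℝ)) (u : ℝ) :
    Qform (p + u • X) Y Z = Qform p Y Z + u * Qform X Y Z := by
  simp only [Qform, Prod.snd_add, Prod.smul_snd, add_dotProduct, smul_dotProduct, smul_eq_mul]
  ring

lemma DQ_eq_Qform (X p Y Z : ℝ × (Fin n → ℝ)) : DQ X p Y Z = Qform X Y Z := by
  have h : HasDerivAt (fun u : ℝ => Qform p Y Z + u * Qform X Y Z) (Qform X Y Z) 0 := by
    simpa using ((hasDerivAt_id (0 : ℝ)).mul_const (Qform X Y Z)).const_add (Qform p Y Z)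
  simpa only [DQ, Qform_add_smul] using h.deriv

lemma Qform_add_Qform_swap (X Y Z : ℝ × (Fin n → ℝ)) :
    Qform X Y Z + Qform Y X Z =
      2 * (mink X Y * Z.1 - 1 / 2 * mink X Z * Y.1 - 1 / 2 * mink Y Z * X.1) := by
  simp only [Qform, mink, dotProduct_comm Y.2 X.2]
  ring

lemma mink_neg_natCast_zero (Z : ℝ × (Fin n → ℝ)) : mink (-(n : ℝ), 0) Z = n * Z.1 := by
  simp [mink]

lemma Qform_time_self (Z : ℝ × (Fin n → ℝ)) :
    Qform ((1 : ℝ), (0 : Fin n → ℝ)) ((1 : ℝ), (0 : Fin n → ℝ)) Z = 0 := by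
  simp [Qform]

lemma Qform_single_self (i : Fin n) (Z : ℝ × (Fin n → ℝ)) :
    Qform ((0 : ℝ), Pi.single i (1 : ℝ)) ((0 : ℝ), Pi.single i (1 : ℝ)) Z = Z.1 := by
  simp [Qform]

end

/-- `Q = r dr ∧ dt` is a conformal Killing–Yano two-form on `(n+1)`-dimensional
Minkowski spacetime, with `div Q = ξ = (−n, 0)`. -/
theorem statement14 (n : ℕ) (hn : 1 ≤ n) :
    (∀ p X Y Z : ℝ × (Fin n → ℝ),
      DQ X p Y Z + DQ Y p X Z =
        (2 / (n : ℝ)) *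
          (mink X Y * mink ((-(n : ℝ), 0)) Z
            - (1/2) * mink X Z * mink ((-(n : ℝ), 0)) Y
            - (1/2) * mink Y Z * mink ((-(n : ℝ), 0)) X)) ∧
    (∀ p Z : ℝ × (Fin n → ℝ),
      -(DQ ((1 : ℝ), (0 : Fin n → ℝ)) p ((1 : ℝ), (0 : Fin n → ℝ)) Z)
          + ∑ i : Fin n,
              DQ ((0 : ℝ), Pi.single i (1 : ℝ)) p ((0 : ℝ), Pi.single i (1 : ℝ)) Z =
        mink ((-(n : ℝ), 0)) Z) := by
  have hn₀ : (n : ℝ) ≠ 0 := Nat.cast_ne_zero.mpr (Nat.one_le_iff_ne_zero.mp hn)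
  refine ⟨fun p X Y Z => ?_, fun p Z => ?_⟩
  · rw [DQ_eq_Qform, DQ_eq_Qform, Qform_add_Qform_swap]
    simp only [mink_neg_natCast_zero]
    field_simp
  · simp only [DQ_eq_Qform, Qform_time_self, Qform_single_self, mink_neg_natCast_zero]
    simp
end

section
/- Let n ≥ 2, let 1 ≤ k ≤ n−1, and let W¹,…,W^k be real symmetric (n−1)×(n−1) matrices. Then the two definitions of the complete polarization of σ_k agree: C(n−1,k)·(1/(n−1)!)·[the coefficient of the monomial t₁t₂⋯t_{n−1} in the polynomial det(t₁·W¹ + ⋯ + t_k·W^k + (t_{k+1} + ⋯ + t_{n−1})·I) in t₁,…,t_{n−1}] = (1/k!)·[the coefficient of the monomial t₁t₂⋯t_k in the polynomial σ_k(t₁·W¹ + ⋯ + t_k·W^k) in t₁,…,t_k]. -/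
open Matrix

/-- The complete polarization `σ_{(k)}(W¹, …, W^k)`: `(1/k!)` times the coefficient of
the monomial `t₁ t₂ ⋯ t_k` in `σ_k (t₁ • W¹ + ⋯ + t_k • W^k)`. -/
noncomputable def polarMat {m k : ℕ} (W : Fin k → Matrix (Fin m) (Fin m) ℝ) : ℝ :=
  (1 / (Nat.factorial k : ℝ)) *
    MvPolynomial.coeff (∑ i : Fin k, Finsupp.single i 1)
      (sigmaM k (∑ i : Fin k,
        (MvPolynomial.X i : MvPolynomial (Fin k) ℝ) • (W i).map MvPolynomial.C))

/-! Write `M = t₁W¹ + ⋯ + t_kW^k` and `s = t_{k+1} + ⋯ + t_{n-1}`. Then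
`det (M + s • 1) = Σ_j c_j s^j`, where `c_j` is the `j`-th coefficient of the characteristic
polynomial of `-M`, and `c_{n-1-k} = σ_k(M)`. The `c_j` and `s` involve disjoint sets of
variables, so the coefficient of `t₁⋯t_{n-1}` in `c_j s^j` is `[t₁⋯t_k] c_j` times
`[t_{k+1}⋯t_{n-1}] s^j`, and the latter is `(n-1-k)!` for `j = n-1-k` and `0` otherwise. Finally
`C(n-1,k) · k! · (n-1-k)! = (n-1)!`. -/

open MvPolynomial Finsupp Function Set

lemma MvPolynomial.coeff_sum_single_one_sum_X_pow {R σ : Type*} [CommSemiring R] [Fintype σ]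
    (n : ℕ) :
    coeff (∑ i, single i 1) ((∑ i, X i : MvPolynomial σ R) ^ n)
      = if Fintype.card σ = n then ((Fintype.card σ).factorial : R) else 0 := by
  have hsum : (∑ i : σ, single i 1 : σ →₀ ℕ).sum (fun _ m ↦ m) = Fintype.card σ := by
    rw [Finsupp.sum_of_support_subset _ (Finset.subset_univ _) _ (fun _ _ ↦ rfl)]
    simp
  rw [coeff_sum_X_pow_of_fintype, hsum,
    multinomial_eq_of_support_subset (Finset.subset_univ _)]
  simp [Nat.multinomial]

lemma Finsupp.mapDomain_add_mapDomain_inj {σ τ υ M : Type*} [AddCommMonoid M]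
    {f : τ → σ} {g : υ → σ} (hf : Injective f) (hg : Injective g)
    (hfg : Disjoint (range f) (range g)) {a a' : τ →₀ M} {b b' : υ →₀ M}
    (h : mapDomain f a + mapDomain g b = mapDomain f a' + mapDomain g b') : a = a' ∧ b = b' := by
  have hgf : ∀ j i, g j ≠ f i := fun j i hji ↦
    hfg.ne_of_mem ⟨i, rfl⟩ ⟨j, rfl⟩ hji.symm
  constructor
  · ext i
    simpa [mapDomain_apply hf, mapDomain_of_notMem_range _ _ (fun ⟨j, hj⟩ ↦ hgf j i hj)]
      using DFunLike.congr_fun h (f i)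
  · ext j
    simpa [mapDomain_apply hg, mapDomain_of_notMem_range _ _ (fun ⟨i, hi⟩ ↦ hgf j i hi.symm)]
      using DFunLike.congr_fun h (g j)

lemma MvPolynomial.coeff_rename_mul_rename {R σ τ υ : Type*} [CommSemiring R]
    {f : τ → σ} {g : υ → σ} (hf : Injective f) (hg : Injective g)
    (hfg : Disjoint (range f) (range g)) (u : MvPolynomial τ R) (v : MvPolynomial υ R)
    (a : τ →₀ ℕ) (b : υ →₀ ℕ) :
    coeff (mapDomain f a + mapDomain g b) (rename f u * rename g v) = coeff a u * coeff b v := by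
  classical
  rw [coeff_mul, Finset.sum_eq_single (mapDomain f a, mapDomain g b)]
  · rw [coeff_rename_mapDomain f hf, coeff_rename_mapDomain g hg]
  · rintro ⟨a', b'⟩ hab hne
    by_contra h
    obtain ⟨d, rfl, -⟩ := coeff_rename_ne_zero f u a' (left_ne_zero_of_mul h)
    obtain ⟨e, rfl, -⟩ := coeff_rename_ne_zero g v b' (right_ne_zero_of_mul h)
    obtain ⟨rfl, rfl⟩ :=
      mapDomain_add_mapDomain_inj hf hg hfg (Finset.HasAntidiagonal.mem_antidiagonal.1 hab)
    exact hne rfl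
  · simp

lemma MvPolynomial.coeff_eval_map_rename_sum_X {R σ τ υ : Type*} [CommSemiring R] [Fintype υ]
    {f : τ → σ} {g : υ → σ} (hf : Injective f) (hg : Injective g)
    (hfg : Disjoint (range f) (range g)) (P : Polynomial (MvPolynomial τ R)) (a : τ →₀ ℕ) :
    coeff (mapDomain f a + mapDomain g (∑ j, single j 1))
        ((P.map (rename f).toRingHom).eval (rename g (∑ j, X j)))
      = (Fintype.card υ).factorial * coeff a (P.coeff (Fintype.card υ)) := by
  simp only [Polynomial.eval_map, Polynomial.eval₂_eq_sum, Polynomial.sum_def, coeff_sum,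
    AlgHom.toRingHom_eq_coe, RingHom.coe_coe, ← map_pow, coeff_rename_mul_rename hf hg hfg,
    coeff_sum_single_one_sum_X_pow, mul_ite, mul_zero, Finset.sum_ite_eq]
  split_ifs with h
  · ring
  · simp [Polynomial.notMem_support_iff.1 h]

lemma Matrix.det_add_smul_one {R ι : Type*} [CommRing R] [Fintype ι] [DecidableEq ι]
    (M : Matrix ι ι R) (s : R) : (M + s • 1).det = (-M).charpoly.eval s := by
  rw [eval_charpoly, sub_neg_eq_add, add_comm, smul_one_eq_diagonal, scalar_apply]

lemma sigmaM_eq_coeff_charpoly_neg {R : Type*} [CommRing R] [Nontrivial R] {m j : ℕ}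
    (M : Matrix (Fin m) (Fin m) R) (hj : j ≤ m) :
    sigmaM j M = (-M).charpoly.coeff (m - j) := by
  have hrev :
      (-M).charpolyRev = (1 + (Polynomial.X : Polynomial R) • M.map Polynomial.C).det := by
    unfold Matrix.charpolyRev
    congr 1
    ext a b
    simp [sub_eq_add_neg]
  rw [sigmaM, ← hrev, ← reverse_charpoly, Polynomial.coeff_reverse, charpoly_natDegree_eq_dim,
    Fintype.card_fin, Polynomial.revAt_le hj]

lemma Fin.disjoint_range_castAdd_natAdd (k l : ℕ) :
    Disjoint (range (Fin.castAdd l : Fin k → Fin (k + l))) (range (Fin.natAdd k)) := by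
  refine Set.disjoint_left.2 ?_
  rintro _ ⟨i, rfl⟩ ⟨j, hj⟩
  simp only [Fin.ext_iff, Fin.val_natAdd, Fin.val_castAdd] at hj
  omega

lemma Fin.sum_single_one_eq_mapDomain_add (k l : ℕ) :
    (∑ i : Fin (k + l), single i 1 : Fin (k + l) →₀ ℕ)
      = mapDomain (Fin.castAdd l) (∑ i, single i 1)
        + mapDomain (Fin.natAdd k) (∑ j, single j 1) := by
  simp [Fin.sum_univ_add, mapDomain_finsetSum]

lemma sum_X_smul_dite_lt {R ι : Type*} [CommSemiring R] [Fintype ι] [DecidableEq ι] {k l : ℕ}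
    (W : Fin k → Matrix ι ι R) :
    ∑ i : Fin (k + l), (X i : MvPolynomial (Fin (k + l)) R) •
        (if h : (i : ℕ) < k then (W ⟨i, h⟩).map C
         else (1 : Matrix ι ι (MvPolynomial (Fin (k + l)) R)))
      = (∑ i, (X i : MvPolynomial (Fin k) R) • (W i).map C).map (rename (Fin.castAdd l))
        + rename (Fin.natAdd k) (∑ j : Fin l, X j : MvPolynomial (Fin l) R) • 1 := by
  simp only [Fin.sum_univ_add, Fin.val_castAdd, Fin.is_lt, dif_pos, Fin.eta, Fin.val_natAdd,
    Nat.not_lt.2 (Nat.le_add_right k _), map_sum, rename_X, Finset.sum_smul]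
  congr 1
  ext a b
  simp [Matrix.sum_apply]

theorem statement16_general (n k : ℕ) (hk : k ≤ n - 1)
    (W : Fin k → Matrix (Fin (n-1)) (Fin (n-1)) ℝ) :
    ((n-1).choose k : ℝ) * (1 / ((n-1).factorial : ℝ)) *
      MvPolynomial.coeff (∑ i : Fin (n-1), Finsupp.single i 1)
        ((∑ i : Fin (n-1), (MvPolynomial.X i : MvPolynomial (Fin (n-1)) ℝ) •
            (if h : (i : ℕ) < k then (W ⟨(i : ℕ), h⟩).map MvPolynomial.C
             else (1 : Matrix (Fin (n-1)) (Fin (n-1)) (MvPolynomial (Fin (n-1)) ℝ)))).det)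
      = polarMat W := by
  revert hk W
  generalize n - 1 = m
  intro hk W
  obtain ⟨l, rfl⟩ := Nat.exists_eq_add_of_le hk
  set M : Matrix (Fin (k + l)) (Fin (k + l)) (MvPolynomial (Fin k) ℝ) :=
    ∑ i, (X i : MvPolynomial (Fin k) ℝ) • (W i).map C
  have hchar : (-M.map (rename (Fin.castAdd l))).charpoly
      = (-M).charpoly.map (rename (Fin.castAdd l)).toRingHom := by
    rw [← charpoly_map, Matrix.map_neg _ (map_neg _)]
    rfl
  rw [sum_X_smul_dite_lt, Matrix.det_add_smul_one, hchar, Fin.sum_single_one_eq_mapDomain_add,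
    coeff_eval_map_rename_sum_X (Fin.castAdd_injective k l) (Fin.natAdd_injective l k)
      (Fin.disjoint_range_castAdd_natAdd k l), Fintype.card_fin, polarMat,
    sigmaM_eq_coeff_charpoly_neg M (Nat.le_add_right k l), Nat.add_sub_cancel_left]
  have hfac : ((k + l).choose k * k.factorial * l.factorial : ℝ) = (k + l).factorial := by
    rw [Nat.choose_symm_add]
    exact_mod_cast Nat.add_choose_mul_factorial_mul_factorial k l
  field_simp
  rw [← hfac]
  ring

/-- the two definitions of the complete polarization of `σ_k` agree:
`C(n−1,k)·(1/(n−1)!)` times the coefficient of `t₁⋯t_{n−1}` in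
`det(t₁W¹ + ⋯ + t_kW^k + (t_{k+1}+⋯+t_{n−1})I)` equals `(1/k!)` times the coefficient
of `t₁⋯t_k` in `σ_k(t₁W¹ + ⋯ + t_kW^k)`. -/
theorem statement16 (n k : ℕ) (hn : 2 ≤ n) (hk1 : 1 ≤ k) (hk : k ≤ n - 1)
    (W : Fin k → Matrix (Fin (n-1)) (Fin (n-1)) ℝ) (hWs : ∀ i, (W i).IsSymm) :
    ((n-1).choose k : ℝ) * (1 / ((n-1).factorial : ℝ)) *
      MvPolynomial.coeff (∑ i : Fin (n-1), Finsupp.single i 1)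
        ((∑ i : Fin (n-1), (MvPolynomial.X i : MvPolynomial (Fin (n-1)) ℝ) •
            (if h : (i : ℕ) < k then (W ⟨(i : ℕ), h⟩).map MvPolynomial.C
             else (1 : Matrix (Fin (n-1)) (Fin (n-1)) (MvPolynomial (Fin (n-1)) ℝ)))).det)
      = polarMat W :=
  statement16_general n k hk W
end
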